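/- arXiv:2505.23991 — 2 statements merged into one kernel-verified Lean document; each statement's English description precedes it below -/
import Mathlib

section
/- In the special case ε₁ = ε₂ = ε, C = A, B = 3A, the function K = Q₁Q₂ + ε r₁ r₂ + A r₁ r₂ (r₁² + r₂²) is a first integral of the Hamiltonian system ṙᵢ = Qᵢ, Q̇₁ = −ε r₁ − A r₁³ − 3A r₁ r₂², Q̇₂ = −ε r₂ − 3A r₁² r₂ − A r₂³; moreover {H, K} = 0 for the canonical Poisson bracket, where H = (Q₁²+Q₂²)/2 + (ε/2)(r₁²+r₂²) + (A/4)(r₁⁴ + 6 r₁² r₂² + r₂⁴). -/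
/-- Canonical Poisson bracket on ℝ⁴ with conjugate pairs (r₁,Q₁), (r₂,Q₂):
{f,g} = Σᵢ (∂f/∂rᵢ ∂g/∂Qᵢ − ∂f/∂Qᵢ ∂g/∂rᵢ). -/
noncomputable def pbracket (f g : ℝ → ℝ → ℝ → ℝ → ℝ) (r1 r2 Q1 Q2 : ℝ) : ℝ :=
  (deriv (fun x => f x r2 Q1 Q2) r1) * (deriv (fun x => g r1 r2 x Q2) Q1)
  - (deriv (fun x => f r1 r2 x Q2) Q1) * (deriv (fun x => g x r2 Q1 Q2) r1)
  + (deriv (fun x => f r1 x Q1 Q2) r2) * (deriv (fun x => g r1 r2 Q1 x) Q2)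
  - (deriv (fun x => f r1 r2 Q1 x) Q2) * (deriv (fun x => g r1 x Q1 Q2) r2)

theorem integrable_case_B_eq_3A (ε A : ℝ)
    (H K : ℝ → ℝ → ℝ → ℝ → ℝ)
    (hH : H = fun r1 r2 Q1 Q2 =>
      (Q1 ^ 2 + Q2 ^ 2) / 2 + ε / 2 * (r1 ^ 2 + r2 ^ 2) +
      A / 4 * (r1 ^ 4 + 6 * r1 ^ 2 * r2 ^ 2 + r2 ^ 4))
    (hK : K = fun r1 r2 Q1 Q2 =>
      Q1 * Q2 + ε * r1 * r2 + A * r1 * r2 * (r1 ^ 2 + r2 ^ 2)) :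
    -- K is a first integral along every solution of the system
    (∀ r1 r2 Q1 Q2 : ℝ → ℝ,
      (∀ t, HasDerivAt r1 (Q1 t) t) →
      (∀ t, HasDerivAt r2 (Q2 t) t) →
      (∀ t, HasDerivAt Q1 (-ε * r1 t - A * (r1 t) ^ 3 - 3 * A * r1 t * (r2 t) ^ 2) t) →
      (∀ t, HasDerivAt Q2 (-ε * r2 t - 3 * A * (r1 t) ^ 2 * r2 t - A * (r2 t) ^ 3) t) →
      ∀ t : ℝ, HasDerivAt (fun s => K (r1 s) (r2 s) (Q1 s) (Q2 s)) 0 t) ∧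
    -- and {H, K} = 0 for the canonical Poisson bracket
    (∀ r1 r2 Q1 Q2 : ℝ, pbracket H K r1 r2 Q1 Q2 = 0) := by
  subst hH hK
  constructor
  · intro r1 r2 Q1 Q2 hr1 hr2 hQ1 hQ2 t
    have h :=
      (((hQ1 t).mul (hQ2 t)).add
        ((((hr1 t).const_mul ε).mul (hr2 t)))).add
        ((((hr1 t).const_mul A).mul (hr2 t)).mul
          (((hr1 t).pow 2).add ((hr2 t).pow 2)))
    refine h.congr_deriv ?_
    simp only [Pi.add_apply, Pi.mul_apply, Pi.pow_apply]
    push_cast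
    ring
  · intro r1 r2 Q1 Q2
    have hHr1 : HasDerivAt (fun x : ℝ =>
        (Q1 ^ 2 + Q2 ^ 2) / 2 + ε / 2 * (x ^ 2 + r2 ^ 2) +
        A / 4 * (x ^ 4 + 6 * x ^ 2 * r2 ^ 2 + r2 ^ 4))
        (ε * r1 + A * r1 ^ 3 + 3 * A * r1 * r2 ^ 2) r1 := by
      have h := ((hasDerivAt_const r1 ((Q1 ^ 2 + Q2 ^ 2) / 2)).add
        ((((hasDerivAt_id r1).pow 2).add (hasDerivAt_const r1 (r2 ^ 2))).const_mul (ε / 2))).add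
        (((((hasDerivAt_id r1).pow 4).add
          ((((hasDerivAt_id r1).pow 2).const_mul 6).mul_const (r2 ^ 2))).add
          (hasDerivAt_const r1 (r2 ^ 4))).const_mul (A / 4))
      refine h.congr_deriv ?_
      first | ring1 | (simp only [id_eq]; push_cast; ring)
    have hHr2 : HasDerivAt (fun x : ℝ =>
        (Q1 ^ 2 + Q2 ^ 2) / 2 + ε / 2 * (r1 ^ 2 + x ^ 2) +
        A / 4 * (r1 ^ 4 + 6 * r1 ^ 2 * x ^ 2 + x ^ 4))
        (ε * r2 + 3 * A * r1 ^ 2 * r2 + A * r2 ^ 3) r2 := by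
      have h := ((hasDerivAt_const r2 ((Q1 ^ 2 + Q2 ^ 2) / 2)).add
        (((hasDerivAt_const r2 (r1 ^ 2)).add ((hasDerivAt_id r2).pow 2)).const_mul (ε / 2))).add
        ((((hasDerivAt_const r2 (r1 ^ 4)).add
          (((hasDerivAt_id r2).pow 2).const_mul (6 * r1 ^ 2))).add
          ((hasDerivAt_id r2).pow 4)).const_mul (A / 4))
      refine h.congr_deriv ?_
      first | ring1 | (simp only [id_eq]; push_cast; ring)
    have hHQ1 : HasDerivAt (fun x : ℝ =>
        (x ^ 2 + Q2 ^ 2) / 2 + ε / 2 * (r1 ^ 2 + r2 ^ 2) +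
        A / 4 * (r1 ^ 4 + 6 * r1 ^ 2 * r2 ^ 2 + r2 ^ 4)) Q1 Q1 := by
      have h := (((((hasDerivAt_id Q1).pow 2).add (hasDerivAt_const Q1 (Q2 ^ 2))).div_const 2).add
        (hasDerivAt_const Q1 (ε / 2 * (r1 ^ 2 + r2 ^ 2)))).add
        (hasDerivAt_const Q1 (A / 4 * (r1 ^ 4 + 6 * r1 ^ 2 * r2 ^ 2 + r2 ^ 4)))
      refine h.congr_deriv ?_
      first | ring1 | (simp only [id_eq]; push_cast; ring)
    have hHQ2 : HasDerivAt (fun x : ℝ =>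
        (Q1 ^ 2 + x ^ 2) / 2 + ε / 2 * (r1 ^ 2 + r2 ^ 2) +
        A / 4 * (r1 ^ 4 + 6 * r1 ^ 2 * r2 ^ 2 + r2 ^ 4)) Q2 Q2 := by
      have h := ((((hasDerivAt_const Q2 (Q1 ^ 2)).add ((hasDerivAt_id Q2).pow 2)).div_const 2).add
        (hasDerivAt_const Q2 (ε / 2 * (r1 ^ 2 + r2 ^ 2)))).add
        (hasDerivAt_const Q2 (A / 4 * (r1 ^ 4 + 6 * r1 ^ 2 * r2 ^ 2 + r2 ^ 4)))
      refine h.congr_deriv ?_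
      first | ring1 | (simp only [id_eq]; push_cast; ring)
    have hKr1 : HasDerivAt (fun x : ℝ =>
        Q1 * Q2 + ε * x * r2 + A * x * r2 * (x ^ 2 + r2 ^ 2))
        (ε * r2 + 3 * A * r1 ^ 2 * r2 + A * r2 ^ 3) r1 := by
      have h := ((hasDerivAt_const r1 (Q1 * Q2)).add
        (((hasDerivAt_id r1).const_mul ε).mul_const r2)).add
        ((((hasDerivAt_id r1).const_mul A).mul_const r2).mul
          (((hasDerivAt_id r1).pow 2).add (hasDerivAt_const r1 (r2 ^ 2))))
      refine h.congr_deriv ?_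
      first | ring1 | (simp only [id_eq, Pi.add_apply, Pi.pow_apply]; push_cast; ring)
    have hKr2 : HasDerivAt (fun x : ℝ =>
        Q1 * Q2 + ε * r1 * x + A * r1 * x * (r1 ^ 2 + x ^ 2))
        (ε * r1 + A * r1 ^ 3 + 3 * A * r1 * r2 ^ 2) r2 := by
      have h := ((hasDerivAt_const r2 (Q1 * Q2)).add
        ((hasDerivAt_id r2).const_mul (ε * r1))).add
        (((hasDerivAt_id r2).const_mul (A * r1)).mul
          ((hasDerivAt_const r2 (r1 ^ 2)).add ((hasDerivAt_id r2).pow 2)))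
      refine h.congr_deriv ?_
      first | ring1 | (simp only [id_eq, Pi.add_apply, Pi.pow_apply]; push_cast; ring)
    have hKQ1 : HasDerivAt (fun x : ℝ =>
        x * Q2 + ε * r1 * r2 + A * r1 * r2 * (r1 ^ 2 + r2 ^ 2)) Q2 Q1 := by
      have h := (((hasDerivAt_id Q1).mul_const Q2).add
        (hasDerivAt_const Q1 (ε * r1 * r2))).add
        (hasDerivAt_const Q1 (A * r1 * r2 * (r1 ^ 2 + r2 ^ 2)))
      refine h.congr_deriv ?_
      first | ring1 | (simp only [id_eq]; push_cast; ring)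
    have hKQ2 : HasDerivAt (fun x : ℝ =>
        Q1 * x + ε * r1 * r2 + A * r1 * r2 * (r1 ^ 2 + r2 ^ 2)) Q1 Q2 := by
      have h := (((hasDerivAt_id Q2).const_mul Q1).add
        (hasDerivAt_const Q2 (ε * r1 * r2))).add
        (hasDerivAt_const Q2 (A * r1 * r2 * (r1 ^ 2 + r2 ^ 2)))
      refine h.congr_deriv ?_
      first | ring1 | (simp only [id_eq]; push_cast; ring)
    simp only [pbracket, hHr1.deriv, hHr2.deriv, hHQ1.deriv, hHQ2.deriv,
      hKr1.deriv, hKr2.deriv, hKQ1.deriv, hKQ2.deriv]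
    ring
end

section
/- For the Garnier case A = B = C, the function K = ((ε₂−ε₁)/2) Q₁² + ε₁((ε₂−ε₁)/2) r₁² + (A/4)[(ε₂−ε₁) r₁²(r₁²+r₂²) + (r₁Q₂ − r₂Q₁)²] Poisson-commutes with H = (Q₁²+Q₂²)/2 + (ε₁/2) r₁² + (ε₂/2) r₂² + (A/4)(r₁²+r₂²)², i.e. {H, K} = 0. -/
theorem deriv_hmul_self (c x : ℝ) : deriv (HMul.hMul c) x = c := by
  have : HasDerivAt (HMul.hMul c) c x := by simpa using (hasDerivAt_id x).const_mul c
  exact this.deriv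

theorem garnier_integral_commutes (ε₁ ε₂ A : ℝ)
    (H K : ℝ → ℝ → ℝ → ℝ → ℝ)
    (hH : H = fun r1 r2 Q1 Q2 =>
      (Q1 ^ 2 + Q2 ^ 2) / 2 + ε₁ / 2 * r1 ^ 2 + ε₂ / 2 * r2 ^ 2 +
      A / 4 * (r1 ^ 2 + r2 ^ 2) ^ 2)
    (hK : K = fun r1 r2 Q1 Q2 =>
      (ε₂ - ε₁) / 2 * Q1 ^ 2 + ε₁ * ((ε₂ - ε₁) / 2) * r1 ^ 2 +
      A / 4 * ((ε₂ - ε₁) * r1 ^ 2 * (r1 ^ 2 + r2 ^ 2) + (r1 * Q2 - r2 * Q1) ^ 2)) :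
    ∀ r1 r2 Q1 Q2 : ℝ, pbracket H K r1 r2 Q1 Q2 = 0 := by
  subst hH hK
  intro r1 r2 Q1 Q2
  unfold pbracket
  simp (disch := fun_prop) only [deriv_fun_add, deriv_fun_sub, deriv_fun_mul, deriv_fun_pow,
    deriv_const', deriv_div_const, deriv_id'', deriv_const_mul_field, deriv_mul_const_field,
    deriv_pow_field, deriv_hmul_self]
  ring
end
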